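/- For any y, y′, y″ ∈ V one has the identity ι(y″)ι(y′)ι(y) ν_*(Cas_{g0}) = (1/2)([y″,[y,y′]] + [y,[y′,y″]] + [y′,[y″,y]]), where for a, b ∈ V the bracket is defined by [a,b] := 2 ν_*^t(a·b) ∈ g0 and for x ∈ g0, a ∈ V one sets [x,a] := ν(x)a ∈ V (and [a,x] := −[x,a]). Consequently the super Jacobi identity [y,[y′,y″]] + [y′,[y″,y]] + [y″,[y,y′]] = 0 holds for all y, y′, y″ ∈ V if and only if the component of ν_*(Cas_{g0}) in S^4(V) vanishes. -/

import Mathlib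

/-  Kostant, (2.36) and the final step in the proof of Theorem 2.8:  with the brackets
    `[a,b] := 2 ν_*ᵗ(a·b)` for `a, b ∈ V` and `[x,a] := ν(x)a = -[a,x]` for `x ∈ g₀`,
    `a ∈ V`, one has
      `ι(y″)ι(y′)ι(y) ν_*(Cas_{g₀}) = ½([y″,[y,y′]] + [y,[y′,y″]] + [y′,[y″,y]])`,
    and the super Jacobi identity on odd elements holds iff the `S⁴(V)`-component of
    `ν_*(Cas_{g₀})` vanishes. -/

theorem triple_contraction_of_casimir_and_jacobi
    (V : Type) [AddCommGroup V] [Module ℂ V] [FiniteDimensional ℂ V]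
    (hdim : Even (Module.finrank ℂ V))
    (B : LinearMap.BilinForm ℂ V)
    (hBalt : ∀ v : V, B v v = 0)
    (hBnd : B.Nondegenerate)
    -- the symmetric algebra `S(V)`, given by its universal property
    (S : Type) [CommRing S] [Algebra ℂ S]
    (ιS : V →ₗ[ℂ] S)
    (hSuniv : ∀ (A : Type) [CommRing A] [Algebra ℂ A] (f : V →ₗ[ℂ] A),
      ∃! g : S →ₐ[ℂ] A, ∀ v : V, g (ιS v) = f v)
    -- the grading `S(V) = ⊕ₙ Sⁿ(V)`
    (𝒜 : ℕ → Submodule ℂ S) [GradedAlgebra 𝒜]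
    (h𝒜 : ∀ n : ℕ, 𝒜 n = LinearMap.range ιS ^ n)
    -- the contraction operators `ι_S(u)`: degree `-1` derivations of `S(V)`
    (DS : V →ₗ[ℂ] Module.End ℂ S)
    (hDSder : ∀ (u : V) (a b : S), DS u (a * b) = DS u a * b + a * DS u b)
    (hDSgen : ∀ u v : V, DS u (ιS v) = algebraMap ℂ S (B u v))
    (hDSdeg : ∀ (u : V) (n : ℕ), ∀ s ∈ 𝒜 (n + 1), DS u s ∈ 𝒜 n)
    -- the Weyl algebra `W(V)`, given by its universal property
    (W : Type) [Ring W] [Algebra ℂ W]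
    (ιW : V →ₗ[ℂ] W)
    (hWrel : ∀ u v : V, ιW u * ιW v - ιW v * ιW u = algebraMap ℂ W (2 * B u v))
    (hWuniv : ∀ (A : Type) [Ring A] [Algebra ℂ A] (f : V →ₗ[ℂ] A),
      (∀ u v : V, f u * f v - f v * f u = algebraMap ℂ A (2 * B u v)) →
      ∃! g : W →ₐ[ℂ] A, ∀ v : V, g (ιW v) = f v)
    -- the identification `η : W(V) ≃ S(V)`, `η(w) = γ(w)1`
    (η : W ≃ₗ[ℂ] S)
    (hη1 : η 1 = 1)
    (hηγ : ∀ (u : V) (w : W), η (ιW u * w) = ιS u * η w + DS u (η w))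
    -- the bilinear form `B_{S(V)}`
    (BS : LinearMap.BilinForm ℂ S)
    (hBSorth : ∀ m n : ℕ, m ≠ n → ∀ w ∈ 𝒜 m, ∀ z ∈ 𝒜 n, BS w z = 0)
    (hBSperm : ∀ (n : ℕ) (u v : Fin n → V),
      BS (∏ i, ιS (u i)) (∏ i, ιS (v i)) =
        ∑ σ : Equiv.Perm (Fin n), ∏ i, B (u i) (v (σ i)))
    -- the Lie algebra `g₀` with invariant form `B_{g₀}` and symplectic representation `ν`
    (L : Type) [LieRing L] [LieAlgebra ℂ L] [FiniteDimensional ℂ L]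
    (B0 : LinearMap.BilinForm ℂ L)
    (hB0symm : ∀ x y : L, B0 x y = B0 y x)
    (hB0nd : B0.Nondegenerate)
    (hB0inv : ∀ x y z : L, B0 ⁅x, y⁆ z + B0 y ⁅x, z⁆ = 0)
    (ν : L →ₗ[ℂ] Module.End ℂ V)
    (hνlie : ∀ x y : L, ν ⁅x, y⁆ = ν x * ν y - ν y * ν x)
    (hνsp : ∀ (x : L) (u v : V), B (ν x u) v + B u (ν x v) = 0)
    -- the lift `ν_* : g₀ → S²(V) ⊂ W(V)` of `ν`
    (νs : L →ₗ[ℂ] W)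
    (hνs2 : ∀ x : L, η (νs x) ∈ 𝒜 2)
    (hνsad : ∀ (x : L) (v : V), νs x * ιW v - ιW v * νs x = ιW (ν x v))
    -- an orthonormal basis of `g₀`, defining the Casimir element
    (k : ℕ) (bx : Module.Basis (Fin k) ℂ L)
    (hbx : ∀ i j, B0 (bx i) (bx j) = if i = j then (1:ℂ) else 0)
    -- the transpose `ν_*ᵗ : S²(V) → g₀`
    (νt : S →ₗ[ℂ] L)
    (hνt : ∀ (x : L), ∀ w ∈ 𝒜 2, BS (η (νs x)) w = B0 x (νt w)) :
    -- the identity (2.36); note `[y″,[y,y′]] = -ν(2ν_*ᵗ(y·y′)) y″`, etc.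
    (∀ y yp ypp : V,
      DS ypp (DS yp (DS y (η (∑ i, νs (bx i) * νs (bx i))))) =
        ιS ((1 / 2 : ℂ) •
          (-(ν ((2 : ℂ) • νt (ιS y * ιS yp)) ypp)
            - ν ((2 : ℂ) • νt (ιS yp * ιS ypp)) y
            - ν ((2 : ℂ) • νt (ιS ypp * ιS y)) yp))) ∧
    -- the super Jacobi identity on `V` holds iff the `S⁴(V)`-component of
    -- `ν_*(Cas_{g₀})` vanishes
    ((∀ y yp ypp : V,
        -(ν ((2 : ℂ) • νt (ιS yp * ιS ypp)) y)
          - ν ((2 : ℂ) • νt (ιS ypp * ιS y)) yp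
          - ν ((2 : ℂ) • νt (ιS y * ιS yp)) ypp = 0) ↔
      DirectSum.decompose 𝒜 (η (∑ i, νs (bx i) * νs (bx i))) 4 = 0) := by
  classical
  -- basic facts
  have hskew : ∀ u v : V, B v u = -B u v := by
    intro u v
    have h := hBalt (u + v)
    simp only [map_add, LinearMap.add_apply, hBalt u, hBalt v] at h
    linear_combination h
  have hDS1 : ∀ u : V, DS u 1 = 0 := by
    intro u
    have h := hDSder u 1 1
    simp only [one_mul, mul_one] at h
    nth_rewrite 1 [← add_zero (DS u 1)] at h
    exact (add_left_cancel h).symm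
  have hDSalg : ∀ (u : V) (c : ℂ), DS u (algebraMap ℂ S c) = 0 := by
    intro u c
    rw [Algebra.algebraMap_eq_smul_one, map_smul, hDS1, smul_zero]
  have hηalg : ∀ c : ℂ, η (algebraMap ℂ W c) = algebraMap ℂ S c := by
    intro c
    rw [Algebra.algebraMap_eq_smul_one, map_smul, hη1, Algebra.algebraMap_eq_smul_one]
  have hηιW : ∀ u : V, η (ιW u) = ιS u := by
    intro u
    have h := hηγ u 1
    rw [mul_one, hη1, mul_one, hDS1] at h
    simpa using h
  -- `S` receives an algebra map to `ℂ`, hence `algebraMap ℂ S` is injective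
  obtain ⟨g, -, -⟩ := hSuniv ℂ 0
  have halginj : Function.Injective (algebraMap ℂ S) := by
    intro c c' h
    have := congrArg g h
    simpa using this
  have hιSinj : ∀ v : V, ιS v = 0 → v = 0 := by
    intro v hv
    apply hBnd.1
    intro u
    have h1 := hDSgen u v
    rw [hv, map_zero] at h1
    have h2 : B u v = 0 := halginj (by simpa using h1.symm)
    rw [hskew u v, h2, neg_zero]
  -- membership basics
  have hmem1 : ∀ v : V, ιS v ∈ 𝒜 1 := by
    intro v
    rw [h𝒜 1, pow_one]
    exact ⟨v, rfl⟩
  have hmem2 : 𝒜 2 = LinearMap.range ιS * LinearMap.range ιS := by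
    rw [h𝒜 2, pow_two]
  have hDS0 : ∀ (u : V), ∀ s ∈ 𝒜 0, DS u s = 0 := by
    intro u s hs
    rw [h𝒜 0, pow_zero] at hs
    obtain ⟨c, rfl⟩ := Submodule.mem_one.mp hs
    exact hDSalg u c
  -- induction principle for quadratics
  have hQind : ∀ (P : S → Prop), (∀ x y : S, P x → P y → P (x + y)) →
      (∀ a b : V, P (ιS a * ιS b)) → ∀ q ∈ 𝒜 2, P q := by
    intro P hadd hgen q hq
    rw [hmem2] at hq
    refine Submodule.mul_induction_on hq ?_ hadd
    rintro m ⟨a, rfl⟩ n ⟨b, rfl⟩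
    exact hgen a b
  -- contraction of a product of two generators
  have hDSq : ∀ (c a b : V), DS c (ιS a * ιS b) = B c a • ιS b + B c b • ιS a := by
    intro c a b
    rw [hDSder, hDSgen, hDSgen, ← Algebra.smul_def, mul_comm, ← Algebra.smul_def]
  -- `B_S` on degree-two elements
  have hBS2 : ∀ a b c d : V,
      BS (ιS a * ιS b) (ιS c * ιS d) = B a c * B b d + B a d * B b c := by
    intro a b c d
    have h := hBSperm 2 ![a, b] ![c, d]
    have huniv : (Finset.univ : Finset (Equiv.Perm (Fin 2))) = {1, Equiv.swap 0 1} := by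
      decide
    rw [huniv, Finset.sum_insert (by decide), Finset.sum_singleton] at h
    simpa [Fin.prod_univ_two, Equiv.swap_apply_left, Equiv.swap_apply_right] using h
  -- double contraction of a quadratic is a `B_S`-pairing
  have hDDq : ∀ q ∈ 𝒜 2, ∀ c d : V,
      DS c (DS d q) = algebraMap ℂ S (BS q (ιS c * ιS d)) := by
    intro q hq
    refine hQind (fun q => ∀ c d : V, DS c (DS d q) = algebraMap ℂ S (BS q (ιS c * ιS d)))
      ?_ ?_ q hq
    · intro x y hx hy c d
      simp only [map_add, LinearMap.add_apply, hx, hy, LinearMap.map_add₂]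
    · intro a b c d
      rw [hDSq]
      simp only [map_add, map_smul, hDSgen, hBS2]
      rw [Algebra.smul_def, Algebra.smul_def, ← map_mul, ← map_mul, ← map_add, ← map_add]
      congr 1
      rw [hskew a d, hskew b c, hskew b d, hskew a c]
      ring
  -- preimage under `η` of a quadratic generator
  have hηinv2 : ∀ a b : V, η.symm (ιS a * ιS b) = ιW a * ιW b - algebraMap ℂ W (B a b) := by
    intro a b
    apply η.injective
    rw [LinearEquiv.apply_symm_apply, map_sub, hηγ a (ιW b), hηιW, hDSgen, hηalg]
    ring
  -- right multiplication by `ιW v` seen through `η`, for quadratics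
  have hmulv : ∀ (v : V), ∀ q ∈ 𝒜 2, η (η.symm q * ιW v) = q * ιS v - DS v q := by
    intro v q hq
    refine hQind (fun q => η (η.symm q * ιW v) = q * ιS v - DS v q) ?_ ?_ q hq
    · intro s t hs ht
      rw [map_add, add_mul, map_add, hs, ht, map_add, add_mul]
      ring
    · intro a b
      rw [hηinv2, sub_mul, map_sub, mul_assoc, hηγ a (ιW b * ιW v), hηγ b (ιW v), hηιW]
      simp only [hDSgen, map_add, hDSq, hDSalg, ← Algebra.smul_def, map_smul, hηιW]
      rw [hskew v a, hskew v b]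
      simp only [Algebra.smul_def, map_neg]
      ring
  -- the key identity: `ι(v) η(ν_*(x)) = -(1/2) ιS(ν(x)v)`
  have hstar : ∀ (x : L) (v : V), DS v (η (νs x)) = (-(1/2) : ℂ) • ιS (ν x v) := by
    intro x v
    have hcom : νs x * ιW v = ιW (ν x v) + ιW v * νs x :=
      sub_eq_iff_eq_add.mp (hνsad x v)
    have h1 : η (νs x * ιW v) = η (νs x) * ιS v - DS v (η (νs x)) := by
      have := hmulv v (η (νs x)) (hνs2 x)
      rwa [LinearEquiv.symm_apply_apply] at this
    have h2 : η (ιW v * νs x) = ιS v * η (νs x) + DS v (η (νs x)) := hηγ v (νs x)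
    have h3 : η (νs x * ιW v) = ιS (ν x v) + η (ιW v * νs x) := by
      rw [hcom, map_add, hηιW]
    rw [h1, h2, mul_comm] at h3
    have h4 : ιS (ν x v) = (-2 : ℂ) • DS v (η (νs x)) := by
      have h5 : (-2 : ℂ) • DS v (η (νs x)) =
          - DS v (η (νs x)) - DS v (η (νs x)) := by module
      rw [h5]
      linear_combination -h3
    rw [h4, smul_smul]
    norm_num
  have hA1 : 𝒜 1 = LinearMap.range ιS := by rw [h𝒜 1, pow_one]
  -- multiplication of quadratics, seen through `η`, up to terms of degree ≤ 2
  have hprod : ∀ (w : W), η w ∈ 𝒜 2 → ∀ q ∈ 𝒜 2,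
      η (η.symm q * w) - q * η w ∈ 𝒜 0 ⊔ 𝒜 2 := by
    intro w hw q hq
    refine hQind (fun q => η (η.symm q * w) - q * η w ∈ 𝒜 0 ⊔ 𝒜 2) ?_ ?_ q hq
    · intro s t hs ht
      have heq : η (η.symm (s + t) * w) - (s + t) * η w
          = (η (η.symm s * w) - s * η w) + (η (η.symm t * w) - t * η w) := by
        rw [map_add, add_mul, map_add]; ring
      rw [heq]; exact add_mem hs ht
    · intro a b
      have hexp : η (η.symm (ιS a * ιS b) * w) - (ιS a * ιS b) * η w
          = ιS a * DS b (η w) + ιS b * DS a (η w) + DS a (DS b (η w)) := by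
        rw [hηinv2, sub_mul, map_sub, mul_assoc, hηγ a (ιW b * w), hηγ b w]
        simp only [map_add, hDSder, hDSgen, ← Algebra.smul_def, map_smul]
        simp only [Algebra.smul_def]
        ring
      rw [hexp]
      have h1 : ιS a * DS b (η w) ∈ 𝒜 2 := by
        rw [hmem2]
        refine Submodule.mul_mem_mul ⟨a, rfl⟩ ?_
        rw [← hA1]; exact hDSdeg b 1 _ hw
      have h2 : ιS b * DS a (η w) ∈ 𝒜 2 := by
        rw [hmem2]
        refine Submodule.mul_mem_mul ⟨b, rfl⟩ ?_
        rw [← hA1]; exact hDSdeg a 1 _ hw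
      have h3 : DS a (DS b (η w)) ∈ 𝒜 0 := hDSdeg a 0 _ (hDSdeg b 1 _ hw)
      exact add_mem (add_mem (Submodule.mem_sup_right h1) (Submodule.mem_sup_right h2))
        (Submodule.mem_sup_left h3)
  have hrem : ∀ x : L, η (νs x * νs x) - η (νs x) * η (νs x) ∈ 𝒜 0 ⊔ 𝒜 2 := by
    intro x
    have := hprod (νs x) (hνs2 x) (η (νs x)) (hνs2 x)
    rwa [LinearEquiv.symm_apply_apply] at this
  -- triple contractions kill `𝒜 0 ⊔ 𝒜 2`
  have hkill02 : ∀ (y yp ypp : V), ∀ s ∈ 𝒜 0 ⊔ 𝒜 2, DS ypp (DS yp (DS y s)) = 0 := by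
    intro y yp ypp s hs
    obtain ⟨s0, h0, s2, h2, rfl⟩ := Submodule.mem_sup.mp hs
    rw [map_add, map_add, map_add, hDS0 y s0 h0, hDS0 ypp _ (hDSdeg yp 0 _ (hDSdeg y 1 _ h2))]
    simp
  -- the degree-4 component of `𝒜 0 ⊔ 𝒜 2` vanishes
  have hdec02 : ∀ s ∈ 𝒜 0 ⊔ 𝒜 2, DirectSum.decompose 𝒜 s 4 = 0 := by
    intro s hs
    obtain ⟨s0, h0, s2, h2, rfl⟩ := Submodule.mem_sup.mp hs
    have h0' := DirectSum.decompose_of_mem_ne 𝒜 h0 (show (0:ℕ) ≠ 4 by norm_num)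
    have h2' := DirectSum.decompose_of_mem_ne 𝒜 h2 (show (2:ℕ) ≠ 4 by norm_num)
    rw [DirectSum.decompose_add, DirectSum.add_apply]
    apply Subtype.ext
    rw [Submodule.coe_add, h0', h2', add_zero, ZeroMemClass.coe_zero]
  have hmemq : ∀ c d : V, ιS c * ιS d ∈ 𝒜 2 := by
    intro c d
    rw [hmem2]; exact Submodule.mul_mem_mul ⟨c, rfl⟩ ⟨d, rfl⟩
  -- triple contraction of the square of a quadratic
  have hq2trip : ∀ s ∈ 𝒜 2, ∀ y yp ypp : V,
      DS ypp (DS yp (DS y (s * s))) =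
        (2:ℂ) • (BS s (ιS y * ιS yp) • DS ypp s)
        + (2:ℂ) • (BS s (ιS y * ιS ypp) • DS yp s)
        + (2:ℂ) • (BS s (ιS yp * ιS ypp) • DS y s) := by
    intro s hs y yp ypp
    have hBSs : ∀ c d : V, BS s (ιS d * ιS c) = BS s (ιS c * ιS d) := by
      intro c d; rw [mul_comm]
    simp only [hDSder, map_add, hDDq s hs, hDSalg]
    simp only [hBSs y yp, hBSs y ypp, hBSs yp ypp]
    simp only [Algebra.smul_def, map_ofNat]
    ring
  -- expansion in the orthonormal basis
  have hcoef : ∀ (z : L) (i : Fin k), B0 (bx i) z = bx.repr z i := by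
    intro z i
    conv_lhs => rw [← Module.Basis.sum_repr bx z]
    rw [map_sum]
    simp [hbx, Finset.sum_ite_eq]
  have hνtexp : ∀ w ∈ 𝒜 2, ∑ i, BS (η (νs (bx i))) w • bx i = νt w := by
    intro w hw
    conv_rhs => rw [← Module.Basis.sum_repr bx (νt w)]
    refine Finset.sum_congr rfl fun i _ => ?_
    rw [hνt _ w hw, hcoef]
  have hsum : ∀ w ∈ 𝒜 2, ∀ u : V,
      ∑ i, BS (η (νs (bx i))) w • ν (bx i) u = ν (νt w) u := by
    intro w hw u
    have h := congrArg (fun z => ν z u) (hνtexp w hw)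
    simpa [map_sum, map_smul, LinearMap.sum_apply, LinearMap.smul_apply] using h
  -- the remainder of `η(Cas)` beyond `∑ qᵢ²` has degree ≤ 2
  have hremC : η (∑ i, νs (bx i) * νs (bx i)) - ∑ i, η (νs (bx i)) * η (νs (bx i))
      ∈ 𝒜 0 ⊔ 𝒜 2 := by
    rw [map_sum, ← Finset.sum_sub_distrib]
    exact Submodule.sum_mem _ fun i _ => hrem (bx i)
  have htrip_eq : ∀ y yp ypp : V,
      DS ypp (DS yp (DS y (η (∑ i, νs (bx i) * νs (bx i))))) =
        ∑ i, DS ypp (DS yp (DS y (η (νs (bx i)) * η (νs (bx i))))) := by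
    intro y yp ypp
    have hsplit : η (∑ i, νs (bx i) * νs (bx i)) =
        (∑ i, η (νs (bx i)) * η (νs (bx i))) +
          (η (∑ i, νs (bx i) * νs (bx i)) - ∑ i, η (νs (bx i)) * η (νs (bx i))) := by
      ring
    rw [hsplit, map_add, map_add, map_add, hkill02 y yp ypp _ hremC, add_zero,
      map_sum, map_sum, map_sum]
  -- per-term evaluation
  have hterm : ∀ (y yp ypp : V) (i : Fin k),
      DS ypp (DS yp (DS y (η (νs (bx i)) * η (νs (bx i))))) =
        -(BS (η (νs (bx i))) (ιS y * ιS yp) • ιS (ν (bx i) ypp))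
        - BS (η (νs (bx i))) (ιS y * ιS ypp) • ιS (ν (bx i) yp)
        - BS (η (νs (bx i))) (ιS yp * ιS ypp) • ιS (ν (bx i) y) := by
    intro y yp ypp i
    rw [hq2trip _ (hνs2 (bx i)) y yp ypp, hstar (bx i) ypp, hstar (bx i) yp, hstar (bx i) y]
    module
  have hS3 : ∀ (c d u : V), ∑ i, BS (η (νs (bx i))) (ιS c * ιS d) • ιS (ν (bx i) u)
      = ιS (ν (νt (ιS c * ιS d)) u) := by
    intro c d u
    rw [← hsum (ιS c * ιS d) (hmemq c d) u, map_sum]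
    simp only [map_smul]
  -- part 1
  have hpart1 : ∀ y yp ypp : V,
      DS ypp (DS yp (DS y (η (∑ i, νs (bx i) * νs (bx i))))) =
        ιS ((1 / 2 : ℂ) •
          (-(ν ((2 : ℂ) • νt (ιS y * ιS yp)) ypp)
            - ν ((2 : ℂ) • νt (ιS yp * ιS ypp)) y
            - ν ((2 : ℂ) • νt (ιS ypp * ιS y)) yp)) := by
    intro y yp ypp
    rw [htrip_eq y yp ypp, Finset.sum_congr rfl (fun i _ => hterm y yp ypp i)]
    simp only [Finset.sum_sub_distrib, Finset.sum_neg_distrib]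
    rw [hS3 y yp ypp, hS3 y ypp yp, hS3 yp ypp y, ← map_neg, ← map_sub, ← map_sub]
    congr 1
    rw [mul_comm (ιS ypp) (ιS y)]
    simp only [map_smul, LinearMap.smul_apply]
    module
  -- the Euler (degree) operator via a `B`-dual pair of bases
  let bV : Module.Basis (Fin (Module.finrank ℂ V)) ℂ V := Module.finBasis ℂ V
  let dV : Fin (Module.finrank ℂ V) → V := fun i => B.dualBasis hBnd bV i
  have hdual : ∀ (v : V) (i), B (dV i) v = bV.repr v i := by
    intro v i
    conv_lhs => rw [← Module.Basis.sum_repr bV v]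
    rw [map_sum]
    simp [LinearMap.BilinForm.apply_dualBasis_left, Finset.sum_ite_eq, dV]
  have hE1 : ∀ v : V, ∑ i, ιS (bV i) * DS (dV i) (ιS v) = ιS v := by
    intro v
    conv_rhs => rw [← Module.Basis.sum_repr bV v]
    rw [map_sum]
    refine Finset.sum_congr rfl fun i _ => ?_
    rw [hDSgen, hdual, map_smul, mul_comm, ← Algebra.smul_def]
  have hEuler : ∀ n : ℕ, ∀ s ∈ 𝒜 n, ∑ i, ιS (bV i) * DS (dV i) s = (n : ℂ) • s := by
    intro n
    induction n with
    | zero =>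
      intro s hs
      rw [h𝒜 0, pow_zero] at hs
      obtain ⟨c, rfl⟩ := Submodule.mem_one.mp hs
      simp [hDSalg]
    | succ n ih =>
      intro s hs
      rw [h𝒜 (n+1), pow_succ] at hs
      refine Submodule.mul_induction_on hs ?_ ?_
      · rintro t ht z ⟨v, rfl⟩
        have ht' : t ∈ 𝒜 n := by rw [h𝒜 n]; exact ht
        have hexp : ∀ i, ιS (bV i) * DS (dV i) (t * ιS v) =
            ιS (bV i) * DS (dV i) t * ιS v + t * (ιS (bV i) * DS (dV i) (ιS v)) := by
          intro i; rw [hDSder]; ring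
        rw [Finset.sum_congr rfl (fun i _ => hexp i), Finset.sum_add_distrib,
          ← Finset.sum_mul, ← Finset.mul_sum, ih t ht', hE1]
        rw [smul_mul_assoc]
        push_cast
        rw [add_smul, one_smul]
      · intro a b ha hb
        rw [Finset.sum_congr rfl (fun i _ => by rw [map_add, mul_add]),
          Finset.sum_add_distrib, ha, hb, smul_add]
  -- a homogeneous element of positive degree with all contractions zero vanishes
  have hvanish : ∀ n : ℕ, 0 < n → ∀ s ∈ 𝒜 n, (∀ v : V, DS v s = 0) → s = 0 := by
    intro n hn s hs hc
    have h := hEuler n s hs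
    simp only [hc, mul_zero, Finset.sum_const_zero] at h
    have hne : (n : ℂ) ≠ 0 := by exact_mod_cast hn.ne'
    exact (smul_eq_zero.mp h.symm).resolve_left hne
  -- the degree-4 component of `η(Cas)` is `∑ᵢ η(ν_* xᵢ)²`
  have hs4mem : (∑ i, η (νs (bx i)) * η (νs (bx i))) ∈ 𝒜 4 := by
    refine Submodule.sum_mem _ fun i _ => ?_
    exact SetLike.mul_mem_graded (hνs2 (bx i)) (hνs2 (bx i))
  have hsplit : η (∑ i, νs (bx i) * νs (bx i)) =
      (∑ i, η (νs (bx i)) * η (νs (bx i))) +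
        (η (∑ i, νs (bx i) * νs (bx i)) - ∑ i, η (νs (bx i)) * η (νs (bx i))) := by ring
  have hcoe : ((DirectSum.decompose 𝒜 (η (∑ i, νs (bx i) * νs (bx i))) 4 : 𝒜 4) : S)
      = ∑ i, η (νs (bx i)) * η (νs (bx i)) := by
    conv_lhs => rw [hsplit]
    rw [DirectSum.decompose_add, DirectSum.add_apply, Submodule.coe_add,
      DirectSum.decompose_of_mem_same 𝒜 hs4mem, hdec02 _ hremC, ZeroMemClass.coe_zero,
      add_zero]
  refine ⟨hpart1, ?_, ?_⟩
  · -- super Jacobi ⇒ the `S⁴(V)`-component vanishes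
    intro hJ
    have htrip0 : ∀ y yp ypp : V,
        DS ypp (DS yp (DS y (∑ i, η (νs (bx i)) * η (νs (bx i))))) = 0 := by
      intro y yp ypp
      have h1 : DS ypp (DS yp (DS y (η (∑ i, νs (bx i) * νs (bx i))))) = 0 := by
        rw [hpart1 y yp ypp]
        have hA : (-(ν ((2 : ℂ) • νt (ιS y * ιS yp)) ypp)
            - ν ((2 : ℂ) • νt (ιS yp * ιS ypp)) y
            - ν ((2 : ℂ) • νt (ιS ypp * ιS y)) yp) = 0 := by
          rw [← hJ y yp ypp]; abel
        rw [hA, smul_zero, map_zero]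
      have h2 := htrip_eq y yp ypp
      rw [h1] at h2
      rw [map_sum, map_sum, map_sum]
      exact h2.symm
    have st2 : ∀ y yp : V,
        DS yp (DS y (∑ i, η (νs (bx i)) * η (νs (bx i)))) = 0 := by
      intro y yp
      exact hvanish 2 (by norm_num) _ (hDSdeg yp 2 _ (hDSdeg y 3 _ hs4mem))
        (fun v => htrip0 y yp v)
    have st1 : ∀ y : V, DS y (∑ i, η (νs (bx i)) * η (νs (bx i))) = 0 := by
      intro y
      exact hvanish 3 (by norm_num) _ (hDSdeg y 3 _ hs4mem) (fun v => st2 y v)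
    have st0 : (∑ i, η (νs (bx i)) * η (νs (bx i))) = 0 :=
      hvanish 4 (by norm_num) _ hs4mem st1
    apply Subtype.ext
    rw [hcoe, st0, ZeroMemClass.coe_zero]
  · -- the `S⁴(V)`-component vanishes ⇒ super Jacobi
    intro h0 y yp ypp
    have hs40 : (∑ i, η (νs (bx i)) * η (νs (bx i))) = 0 := by
      rw [← hcoe, h0, ZeroMemClass.coe_zero]
    have h1 : DS ypp (DS yp (DS y (η (∑ i, νs (bx i) * νs (bx i))))) = 0 := by
      have h2 : ∑ i, DS ypp (DS yp (DS y (η (νs (bx i)) * η (νs (bx i))))) =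
          DS ypp (DS yp (DS y (∑ i, η (νs (bx i)) * η (νs (bx i))))) := by
        rw [map_sum, map_sum, map_sum]
      rw [htrip_eq y yp ypp, h2, hs40]
      simp
    have h3 := hpart1 y yp ypp
    rw [h1] at h3
    have hX := hιSinj _ h3.symm
    have hA : (-(ν ((2 : ℂ) • νt (ιS y * ιS yp)) ypp)
        - ν ((2 : ℂ) • νt (ιS yp * ιS ypp)) y
        - ν ((2 : ℂ) • νt (ιS ypp * ιS y)) yp) = 0 := by
      have h4 := congrArg (fun z => (2 : ℂ) • z) hX
      simpa [smul_smul] using h4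
    have hJA : (-(ν ((2 : ℂ) • νt (ιS yp * ιS ypp)) y)
        - ν ((2 : ℂ) • νt (ιS ypp * ιS y)) yp
        - ν ((2 : ℂ) • νt (ιS y * ιS yp)) ypp) =
        (-(ν ((2 : ℂ) • νt (ιS y * ιS yp)) ypp)
        - ν ((2 : ℂ) • νt (ιS yp * ιS ypp)) y
        - ν ((2 : ℂ) • νt (ιS ypp * ιS y)) yp) := by abel
    rw [hJA, hA]
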